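/- Let λ be an irrational real number and let c : ℝ² → ℝ be a smooth 2π-biperiodic function. Suppose f : ℝ² → ℝ is a smooth 2π-biperiodic function satisfying λ·∂f/∂x(x,y) + ∂f/∂y(x,y) + f(x,y)·c(x,y) = 0 for all (x,y) ∈ ℝ². Then either f is identically zero, or f has no zeros. Moreover: if f has no zeros, then there exists a smooth 2π-biperiodic function u : ℝ² → ℝ with c = λ·∂u/∂x + ∂u/∂y on ℝ²; and conversely, if c = λ·∂u/∂x + ∂u/∂y for some smooth 2π-biperiodic u, then every such solution f is of the form f(x,y) = C·e^{−u(x,y)} for some constant C ∈ ℝ. -/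

import Mathlib

/-! Along a characteristic line `t ↦ (x + λt, y + t)` the equation reads `h' = -c h` for
`h(t) = f(x + λt, y + t)`, so `h · exp(∫ c)` is constant: zeros of `f` propagate along lines, and
when `c = λ ∂u/∂x + ∂u/∂y` the product `f · e^u` is constant on lines. As `λ` is irrational,
`2πℤ + 2πλℤ` is dense in `ℝ`, hence every line together with its `2πℤ²`-translates is dense in
`ℝ²`; by continuity and periodicity both facts become global. If `f` has no zeros,
`u = -log f` works. -/

open Real

/-- A function `u : ℝ² → ℝ` (curried) is smooth if it is `C^∞` as a function on `ℝ × ℝ`. -/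
def Smooth2 (u : ℝ → ℝ → ℝ) : Prop :=
  ContDiff ℝ (⊤ : ℕ∞) fun p : ℝ × ℝ => u p.1 p.2

/-- A function `u : ℝ² → ℝ` is 2π-biperiodic if `u(x+2π, y) = u(x,y) = u(x, y+2π)`. -/
def Biperiodic (u : ℝ → ℝ → ℝ) : Prop :=
  ∀ x y : ℝ, u (x + 2 * π) y = u x y ∧ u x (y + 2 * π) = u x y

/-- A function `v : ℝ → ℝ` is 2π-periodic if `v(x+2π) = v(x)` for all `x`. -/
def Periodic2pi (v : ℝ → ℝ) : Prop := ∀ x : ℝ, v (x + 2 * π) = v x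

/-- Partial derivative in the first variable. -/
noncomputable def pderivX (u : ℝ → ℝ → ℝ) : ℝ → ℝ → ℝ :=
  fun x y => deriv (fun t => u t y) x

/-- Partial derivative in the second variable. -/
noncomputable def pderivY (u : ℝ → ℝ → ℝ) : ℝ → ℝ → ℝ :=
  fun x y => deriv (fun t => u x t) y

section PartialDerivatives

variable {f : ℝ → ℝ → ℝ} {a b : ℝ}

theorem pderivX_eq_fderiv (hf : DifferentiableAt ℝ (fun p : ℝ × ℝ => f p.1 p.2) (a, b)) :
    pderivX f a b = fderiv ℝ (fun p : ℝ × ℝ => f p.1 p.2) (a, b) (1, 0) :=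
  (hf.hasFDerivAt.comp_hasDerivAt (x := a) (f := fun t => (t, b))
    ((hasDerivAt_id a).prodMk (hasDerivAt_const a b))).deriv

theorem pderivY_eq_fderiv (hf : DifferentiableAt ℝ (fun p : ℝ × ℝ => f p.1 p.2) (a, b)) :
    pderivY f a b = fderiv ℝ (fun p : ℝ × ℝ => f p.1 p.2) (a, b) (0, 1) :=
  (hf.hasFDerivAt.comp_hasDerivAt (x := b) (f := fun t => (a, t))
    ((hasDerivAt_const b a).prodMk (hasDerivAt_id b))).deriv

theorem hasDerivAt_pderivX (hf : DifferentiableAt ℝ (fun p : ℝ × ℝ => f p.1 p.2) (a, b)) :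
    HasDerivAt (fun t => f t b) (pderivX f a b) a :=
  (hf.comp (x := a) (g := fun p : ℝ × ℝ => f p.1 p.2) (f := fun t => (t, b))
    (differentiableAt_id.prodMk (differentiableAt_const b))).hasDerivAt

theorem hasDerivAt_pderivY (hf : DifferentiableAt ℝ (fun p : ℝ × ℝ => f p.1 p.2) (a, b)) :
    HasDerivAt (fun t => f a t) (pderivY f a b) b :=
  (hf.comp (x := b) (g := fun p : ℝ × ℝ => f p.1 p.2) (f := fun t => (a, t))
    ((differentiableAt_const a).prodMk differentiableAt_id)).hasDerivAt

theorem hasDerivAt_comp_line (l x y t : ℝ)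
    (hf : DifferentiableAt ℝ (fun p : ℝ × ℝ => f p.1 p.2) (x + l * t, y + t)) :
    HasDerivAt (fun s => f (x + l * s) (y + s))
      (l * pderivX f (x + l * t) (y + t) + pderivY f (x + l * t) (y + t)) t := by
  have hline : HasDerivAt (fun s => (x + l * s, y + s)) (l, (1 : ℝ)) t := by
    simpa using (((hasDerivAt_id t).const_mul l).const_add x).prodMk ((hasDerivAt_id t).const_add y)
  refine (hf.hasFDerivAt.comp_hasDerivAt t hline).congr_deriv ?_
  have hdir : ((l, 1) : ℝ × ℝ) = l • ((1 : ℝ), (0 : ℝ)) + ((0 : ℝ), (1 : ℝ)) := by simp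
  rw [pderivX_eq_fderiv hf, pderivY_eq_fderiv hf, hdir, map_add, map_smul, smul_eq_mul]

end PartialDerivatives

theorem Biperiodic.apply_add_int_mul {f : ℝ → ℝ → ℝ} (hf : Biperiodic f) (m n : ℤ) (x y : ℝ) :
    f (x + 2 * π * m) (y + 2 * π * n) = f x y := by
  have hx : Function.Periodic (fun t => f t y) (2 * π) := fun t => (hf t y).1
  have hy : Function.Periodic (fun t => f (x + 2 * π * m) t) (2 * π) := fun t => (hf _ t).2
  calc f (x + 2 * π * m) (y + 2 * π * n) = f (x + 2 * π * m) y := by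
        simpa only [mul_comm] using hy.int_mul n y
    _ = f x y := by simpa only [mul_comm] using hx.int_mul m x

theorem dense_lineOrbit {l : ℝ} (hl : Irrational l) (x y : ℝ) :
    Dense {p : ℝ × ℝ | ∃ (t : ℝ) (m n : ℤ), p = (x + l * t + 2 * π * m, y + t + 2 * π * n)} := by
  set ψ : ℝ × ℝ → ℝ := fun p => p.1 - x - l * (p.2 - y)
  have hψ : IsOpenMap ψ := IsOpenMap.of_sections fun p =>
    ⟨fun s => (s + x + l * (p.2 - y), p.2), by fun_prop, by ext <;> simp only [ψ]; ring,
      fun s => by simp only [ψ]; ring⟩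
  have hG : Dense (AddSubgroup.closure {2 * π * l, 2 * π} : Set ℝ) := by
    rw [dense_addSubgroupClosure_pair_iff, mul_div_cancel_left₀ l (by positivity)]
    exact hl
  refine (hG.preimage hψ).mono fun p hp => ?_
  obtain ⟨m, n, hmn⟩ := AddSubgroup.mem_closure_pair.1 hp
  refine ⟨p.2 - y + 2 * π * m, n, -m, ?_⟩
  simp only [zsmul_eq_mul, ψ] at hmn
  ext <;> push_cast <;> linarith

theorem Biperiodic.eq_of_eq_on_line {l : ℝ} (hl : Irrational l) {F G : ℝ → ℝ → ℝ}
    (hF : Continuous fun p : ℝ × ℝ => F p.1 p.2) (hG : Continuous fun p : ℝ × ℝ => G p.1 p.2)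
    (hFp : Biperiodic F) (hGp : Biperiodic G) (x y : ℝ)
    (hline : ∀ t, F (x + l * t) (y + t) = G (x + l * t) (y + t)) (a b : ℝ) :
    F a b = G a b := by
  refine congrFun (hF.ext_on (dense_lineOrbit hl x y) hG ?_) (a, b)
  rintro _ ⟨t, m, n, rfl⟩
  simp only [hFp.apply_add_int_mul, hGp.apply_add_int_mul, hline]

theorem mul_exp_eq_of_hasDerivAt {h w C : ℝ → ℝ} (hh : ∀ t, HasDerivAt h (-(h t * C t)) t)
    (hw : ∀ t, HasDerivAt w (C t) t) (t : ℝ) :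
    h t * exp (w t) = h 0 * exp (w 0) := by
  have hderiv : ∀ s, HasDerivAt (fun s => h s * exp (w s)) 0 s := fun s =>
    ((hh s).mul (hw s).exp).congr_deriv (by ring)
  exact is_const_of_deriv_eq_zero (fun s => (hderiv s).differentiableAt)
    (fun s => (hderiv s).deriv) t 0

section TransportEquation

variable {l : ℝ} {c f : ℝ → ℝ → ℝ}

theorem eq_zero_of_apply_eq_zero (hl : Irrational l) (hc : Continuous fun p : ℝ × ℝ => c p.1 p.2)
    (hf : Differentiable ℝ fun p : ℝ × ℝ => f p.1 p.2) (hfp : Biperiodic f)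
    (heq : ∀ x y, l * pderivX f x y + pderivY f x y + f x y * c x y = 0)
    {x₀ y₀ : ℝ} (h₀ : f x₀ y₀ = 0) (a b : ℝ) : f a b = 0 := by
  refine hfp.eq_of_eq_on_line hl (G := fun _ _ => 0) hf.continuous continuous_const
    (fun _ _ => ⟨rfl, rfl⟩) x₀ y₀ (fun t => ?_) a b
  set C : ℝ → ℝ := fun s => c (x₀ + l * s) (y₀ + s)
  have hC : Continuous C := hc.comp (f := fun s => (x₀ + l * s, y₀ + s)) (by fun_prop)
  have hline : ∀ s, HasDerivAt (fun s => f (x₀ + l * s) (y₀ + s))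
      (-(f (x₀ + l * s) (y₀ + s) * C s)) s := fun s =>
    (hasDerivAt_comp_line l x₀ y₀ s (hf _)).congr_deriv
      (eq_neg_of_add_eq_zero_left (heq _ _))
  simpa [h₀] using
    mul_exp_eq_of_hasDerivAt hline (fun s => (hC.integral_hasStrictDerivAt 0 s).hasDerivAt) t

theorem exists_potential_of_ne_zero (hf : Smooth2 f) (hfp : Biperiodic f)
    (heq : ∀ x y, l * pderivX f x y + pderivY f x y + f x y * c x y = 0)
    (hne : ∀ x y, f x y ≠ 0) :
    ∃ u : ℝ → ℝ → ℝ, Smooth2 u ∧ Biperiodic u ∧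
      ∀ x y, c x y = l * pderivX u x y + pderivY u x y := by
  refine ⟨fun x y => -log (f x y), (hf.log fun p => hne p.1 p.2).neg,
    fun x y => by simp only [(hfp x y).1, (hfp x y).2, and_self], fun x y => ?_⟩
  have hd := hf.differentiable (by simp) (x, y)
  have hux : pderivX (fun x y => -log (f x y)) x y = -(pderivX f x y / f x y) :=
    ((hasDerivAt_pderivX hd).log (hne x y)).neg.deriv
  have huy : pderivY (fun x y => -log (f x y)) x y = -(pderivY f x y / f x y) :=
    ((hasDerivAt_pderivY hd).log (hne x y)).neg.deriv
  rw [hux, huy]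
  field_simp [hne x y]
  linarith [heq x y]

theorem eq_const_mul_exp_neg (hl : Irrational l) {u : ℝ → ℝ → ℝ}
    (hf : Differentiable ℝ fun p : ℝ × ℝ => f p.1 p.2) (hfp : Biperiodic f)
    (hu : Differentiable ℝ fun p : ℝ × ℝ => u p.1 p.2) (hup : Biperiodic u)
    (heq : ∀ x y, l * pderivX f x y + pderivY f x y + f x y * c x y = 0)
    (hcu : ∀ x y, c x y = l * pderivX u x y + pderivY u x y) :
    ∃ C : ℝ, ∀ x y, f x y = C * exp (-u x y) := by
  refine ⟨f 0 0 * exp (u 0 0), fun x y => ?_⟩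
  have hconst : f x y * exp (u x y) = f 0 0 * exp (u 0 0) := by
    refine Biperiodic.eq_of_eq_on_line hl (F := fun x y => f x y * exp (u x y))
      (G := fun _ _ => f 0 0 * exp (u 0 0)) (hf.continuous.mul hu.continuous.rexp)
      continuous_const (fun x y => ?_) (fun _ _ => ⟨rfl, rfl⟩) 0 0 (fun t => ?_) x y
    · simp only [(hfp x y).1, (hfp x y).2, (hup x y).1, (hup x y).2, and_self]
    · have hfline : ∀ s, HasDerivAt (fun s => f (0 + l * s) (0 + s))
          (-(f (0 + l * s) (0 + s) * c (0 + l * s) (0 + s))) s := fun s =>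
        (hasDerivAt_comp_line l 0 0 s (hf _)).congr_deriv
          (eq_neg_of_add_eq_zero_left (heq _ _))
      have huline : ∀ s, HasDerivAt (fun s => u (0 + l * s) (0 + s))
          (c (0 + l * s) (0 + s)) s := fun s =>
        (hasDerivAt_comp_line l 0 0 s (hu _)).congr_deriv (hcu _ _).symm
      simpa using mul_exp_eq_of_hasDerivAt hfline huline t
  rw [exp_neg, ← hconst]
  field_simp

end TransportEquation

theorem solution_dichotomy_and_form_general (l : ℝ) (hl : Irrational l)
    (c : ℝ → ℝ → ℝ) (hc : Smooth2 c)
    (f : ℝ → ℝ → ℝ) (hf : Smooth2 f) (hfp : Biperiodic f)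
    (heq : ∀ x y, l * pderivX f x y + pderivY f x y + f x y * c x y = 0) :
    ((∀ x y, f x y = 0) ∨ (∀ x y, f x y ≠ 0)) ∧
    ((∀ x y, f x y ≠ 0) →
      ∃ u : ℝ → ℝ → ℝ, Smooth2 u ∧ Biperiodic u ∧
        ∀ x y, c x y = l * pderivX u x y + pderivY u x y) ∧
    (∀ u : ℝ → ℝ → ℝ, Smooth2 u → Biperiodic u →
      (∀ x y, c x y = l * pderivX u x y + pderivY u x y) →
      ∃ C : ℝ, ∀ x y, f x y = C * Real.exp (-(u x y))) := by
  have hfd : Differentiable ℝ fun p : ℝ × ℝ => f p.1 p.2 := hf.differentiable (by simp)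
  refine ⟨?_, exists_potential_of_ne_zero hf hfp heq, fun u hu hup hcu =>
    eq_const_mul_exp_neg hl hfd hfp (hu.differentiable (by simp)) hup heq hcu⟩
  by_cases hzero : ∃ x y, f x y = 0
  · obtain ⟨x₀, y₀, h₀⟩ := hzero
    exact Or.inl (eq_zero_of_apply_eq_zero hl hc.continuous hfd hfp heq h₀)
  · push Not at hzero
    exact Or.inr hzero

/-- For irrational `λ` and smooth 2π-biperiodic `c`, any smooth 2π-biperiodic solution `f`
of `λ·∂f/∂x + ∂f/∂y + f·c = 0` is either identically zero or nowhere zero. If `f` is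
nowhere zero then `c = λ·∂u/∂x + ∂u/∂y` for some smooth 2π-biperiodic `u`; conversely if
`c = λ·∂u/∂x + ∂u/∂y` for such a `u` then `f = C·e^{−u}` for some constant `C`. -/
theorem solution_dichotomy_and_form (l : ℝ) (hl : Irrational l)
    (c : ℝ → ℝ → ℝ) (hc : Smooth2 c) (hcp : Biperiodic c)
    (f : ℝ → ℝ → ℝ) (hf : Smooth2 f) (hfp : Biperiodic f)
    (heq : ∀ x y, l * pderivX f x y + pderivY f x y + f x y * c x y = 0) :
    ((∀ x y, f x y = 0) ∨ (∀ x y, f x y ≠ 0)) ∧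
    ((∀ x y, f x y ≠ 0) →
      ∃ u : ℝ → ℝ → ℝ, Smooth2 u ∧ Biperiodic u ∧
        ∀ x y, c x y = l * pderivX u x y + pderivY u x y) ∧
    (∀ u : ℝ → ℝ → ℝ, Smooth2 u → Biperiodic u →
      (∀ x y, c x y = l * pderivX u x y + pderivY u x y) →
      ∃ C : ℝ, ∀ x y, f x y = C * Real.exp (-(u x y))) :=
  solution_dichotomy_and_form_general l hl c hc f hf hfp heq
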